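/- arXiv:math/0304183 — 6 statements merged into one kernel-verified Lean document; each statement's English description precedes it below -/
import Mathlib

section
/- Let W be a vector space over a field F and let k, s be positive integers. The number of Freiman s-isomorphism classes of subsets of W of cardinality k is at most k^{2sk}. -/
/-!
Enumerate a `k`-set as an injective `e : Fin k → W`. Whether two `s`-fold sums of its elements
agree depends only on whether the corresponding vector `χ_u - χ_v ∈ F^k` (a difference of
multiplicity vectors of `s`-tuples; there are at most `k^(2s)` of them) lies in the kernel of
`c ↦ ∑ j, c j • e j`. Such a vector lies in that kernel iff it lies in the span `V_e` of those
difference vectors that do, and `V_e`, having dimension at most `k`, is spanned by `k` of them.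
So a `k`-tuple of difference vectors determines the Freiman `s`-isomorphism class, via
`e i ↦ e' i`, and there are at most `(k^(2s))^k` such tuples.
-/

open Finset Function Set Submodule Module

theorem exists_finset_card_le_of_invariant {α β : Type*} (S : Set α) (T : Finset β) (κ : α → β)
    (r : α → α → Prop) (hκ : MapsTo κ S T) (hr : ∀ a ∈ S, ∀ b ∈ S, κ a = κ b → r a b) :
    ∃ reps : Finset α, #reps ≤ #T ∧ ∀ a ∈ S, ∃ x ∈ reps, r a x := by
  obtain ⟨u, huS, hinj, himg⟩ := (Set.surjOn_image κ S).exists_subset_injOn_image_eq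
  have hu : u.Finite :=
    .of_finite_image (himg ▸ T.finite_toSet.subset hκ.image_subset) hinj
  refine ⟨hu.toFinset, card_le_card_of_injOn κ (fun x hx ↦ hκ (huS (by simpa using hx)))
    (by simpa using hinj), fun a ha ↦ ?_⟩
  obtain ⟨x, hx, hxa⟩ : κ a ∈ κ '' u := himg ▸ mem_image_of_mem κ ha
  exact ⟨x, hu.mem_toFinset.2 hx, hr a ha x (huS hx) hxa.symm⟩

theorem Multiset.exists_fin_map_univ_eq {α : Type*} {n : ℕ} {σ : Multiset α}
    (hσ : Multiset.card σ = n) : ∃ g : Fin n → α, univ.val.map g = σ := by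
  obtain ⟨l, rfl⟩ := Quot.exists_rep σ
  subst hσ
  exact ⟨l.get, (by rw [Fin.univ_val_map, List.ofFn_get] :
    univ.val.map l.get = (l : Multiset α))⟩

theorem Multiset.exists_fin_map_comp_eq {ι α : Type*} {n : ℕ} {e : ι → α} {σ : Multiset α}
    (hσe : ∀ x ∈ σ, x ∈ Set.range e) (hσ : Multiset.card σ = n) :
    ∃ u : Fin n → ι, univ.val.map (e ∘ u) = σ := by
  obtain ⟨g, rfl⟩ := Multiset.exists_fin_map_univ_eq hσ
  choose u hu using fun i ↦ hσe (g i) (Multiset.mem_map_of_mem g (Finset.mem_univ i))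
  exact ⟨u, by rw [show e ∘ u = g from funext hu]⟩

theorem isAddFreimanIso_extend_range {ι α β : Type*} [AddCommMonoid α] [AddCommMonoid β]
    {n : ℕ} {e : ι → α} {e' : ι → β} (he : Injective e) (he' : Injective e')
    (h : ∀ u v : Fin n → ι, ∑ i, e (u i) = ∑ i, e (v i) ↔ ∑ i, e' (u i) = ∑ i, e' (v i)) :
    IsAddFreimanIso n (Set.range e) (Set.range e') (extend e e' 0) := by
  have hfe : extend e e' 0 ∘ e = e' := extend_comp he e' 0
  refine ⟨?_, fun σ τ hσ hτ hσn hτn ↦ ?_⟩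
  · have hinj : InjOn (extend e e' 0) (Set.range e) := by
      rintro _ ⟨i, rfl⟩ _ ⟨j, rfl⟩ hij
      simp only [he.extend_apply] at hij
      rw [he' hij]
    simpa only [← range_comp, hfe] using hinj.bijOn_image
  · obtain ⟨u, rfl⟩ := Multiset.exists_fin_map_comp_eq (fun x hx ↦ hσ hx) hσn
    obtain ⟨v, rfl⟩ := Multiset.exists_fin_map_comp_eq (fun x hx ↦ hτ hx) hτn
    simp only [Multiset.map_map, ← comp_assoc, hfe, ← Finset.sum_eq_multiset_sum]
    exact (h u v).symm

theorem exists_fin_tuple_range_subset_span_eq {K V : Type*} [DivisionRing K] [AddCommGroup V]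
    [Module K V] [Module.Finite K V] {S : Set V} (hS : S.Nonempty) {n : ℕ}
    (hn : finrank K V ≤ n) :
    ∃ g : Fin n → V, Set.range g ⊆ S ∧ span K (Set.range g) = span K S := by
  obtain ⟨b, hbS, hspan, hli⟩ := exists_linearIndependent K S
  have : Finite b := hli.finite
  have : Fintype b := Fintype.ofFinite b
  obtain ⟨ι⟩ : Nonempty (b ↪ Fin n) := Function.Embedding.nonempty_of_card_le
    (by simpa using hli.fintype_card_le_finrank.trans hn)
  obtain ⟨x, hx⟩ := hS
  set g : Fin n → V := extend ι Subtype.val fun _ ↦ x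
  have hgS : Set.range g ⊆ S := (range_extend_subset _ _ _).trans <|
    union_subset (by simpa using hbS) (by rintro _ ⟨_, -, rfl⟩; exact hx)
  refine ⟨g, hgS, le_antisymm (span_mono hgS) ?_⟩
  rw [← hspan]
  exact span_mono fun y hy ↦ ⟨ι ⟨y, hy⟩, ι.injective.extend_apply _ _ _⟩

theorem Submodule.mem_iff_mem_span_inter {R M : Type*} [Ring R] [AddCommGroup M] [Module R M]
    {S : Set M} {p : Submodule R M} {x : M} (hx : x ∈ S) : x ∈ p ↔ x ∈ span R (S ∩ p) :=
  ⟨fun hxp ↦ subset_span ⟨hx, hxp⟩, fun hx ↦ span_le.2 inter_subset_right hx⟩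

section Relations

variable (R : Type*) {ι W W' : Type*} [Ring R] [Fintype ι] [DecidableEq ι]
  [AddCommGroup W] [Module R W] [AddCommGroup W'] [Module R W'] {s : ℕ}

def countVec (u : Fin s → ι) : ι → R := ∑ i, Pi.single (u i) 1

open scoped Classical in
noncomputable def relVecs (s : ℕ) (ι : Type*) [Fintype ι] [DecidableEq ι] : Finset (ι → R) :=
  univ.image fun p : (Fin s → ι) × (Fin s → ι) ↦ countVec R p.1 - countVec R p.2

noncomputable def relSpan (s : ℕ) (e : ι → W) : Submodule R (ι → R) :=
  span R (relVecs R s ι ∩ LinearMap.ker (Fintype.linearCombination R e))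

variable {R}

theorem card_relVecs_le : #(relVecs R s ι) ≤ Fintype.card ι ^ (2 * s) := by
  classical
  exact card_image_le.trans_eq <| by simp [pow_mul', sq]

theorem zero_mem_relVecs [Nonempty ι] (s : ℕ) : (0 : ι → R) ∈ relVecs R s ι := by
  classical
  exact mem_image.2 ⟨(fun _ ↦ Classical.arbitrary ι, fun _ ↦ Classical.arbitrary ι),
    Finset.mem_univ _, sub_self _⟩

theorem linearCombination_countVec (e : ι → W) (u : Fin s → ι) :
    Fintype.linearCombination R e (countVec R u) = ∑ i, e (u i) := by
  simp [countVec, map_sum, Fintype.linearCombination_apply_single]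

theorem sum_eq_sum_iff_sub_mem_ker (e : ι → W) (u v : Fin s → ι) :
    ∑ i, e (u i) = ∑ i, e (v i) ↔
      countVec R u - countVec R v ∈ LinearMap.ker (Fintype.linearCombination R e) := by
  rw [LinearMap.mem_ker, map_sub, linearCombination_countVec, linearCombination_countVec,
    sub_eq_zero]

theorem sum_eq_sum_iff_of_relSpan_eq {e : ι → W} {e' : ι → W'}
    (h : relSpan R s e = relSpan R s e') (u v : Fin s → ι) :
    ∑ i, e (u i) = ∑ i, e (v i) ↔ ∑ i, e' (u i) = ∑ i, e' (v i) := by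
  have hmem : countVec R u - countVec R v ∈ (relVecs R s ι : Set (ι → R)) := by
    classical
    exact mem_coe.2 <| mem_image_of_mem _ (Finset.mem_univ (u, v))
  rw [sum_eq_sum_iff_sub_mem_ker (R := R), sum_eq_sum_iff_sub_mem_ker (R := R),
    mem_iff_mem_span_inter hmem,
    mem_iff_mem_span_inter (p := LinearMap.ker (Fintype.linearCombination R e')) hmem]
  exact Iff.of_eq (congrArg (_ ∈ ·) h)

end Relations

theorem count_freiman_iso_classes_general {F W : Type*} [Field F] [AddCommGroup W] [Module F W]
    (s k : ℕ) (hk : 1 ≤ k) :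
    ∃ reps : Finset (Finset W), reps.card ≤ k ^ (2 * s * k) ∧
      ∀ A : Finset W, A.card = k →
        ∃ X ∈ reps, ∃ f : W → W, IsAddFreimanIso s (A : Set W) (X : Set W) f := by
  classical
  have : Nonempty (Fin k) := ⟨⟨0, hk⟩⟩
  have hne (e : Fin k → W) :
      ((relVecs F s (Fin k) : Set (Fin k → F)) ∩
        LinearMap.ker (Fintype.linearCombination F e)).Nonempty :=
    ⟨0, zero_mem_relVecs s, zero_mem _⟩
  choose κ hκ hκspan using fun e ↦
    exists_fin_tuple_range_subset_span_eq (hne e) (finrank_fin_fun F).le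
  obtain ⟨reps, hcard, hreps⟩ := exists_finset_card_le_of_invariant {e | Injective e}
    (Fintype.piFinset fun _ ↦ relVecs F s (Fin k)) κ
    (fun e e' ↦ ∃ f, IsAddFreimanIso s (Set.range e) (Set.range e') f)
    (fun e _ ↦ Fintype.mem_piFinset.2 fun i ↦ (hκ e ⟨i, rfl⟩).1)
    (fun e he e' he' h ↦ ⟨_, isAddFreimanIso_extend_range he he' <|
      sum_eq_sum_iff_of_relSpan_eq (R := F) (by rw [relSpan, relSpan, ← hκspan, ← hκspan, h])⟩)
  refine ⟨reps.image fun e ↦ univ.image e, card_image_le.trans (hcard.trans ?_), fun A hA ↦ ?_⟩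
  · calc #(Fintype.piFinset fun _ : Fin k ↦ relVecs F s (Fin k))
        _ = #(relVecs F s (Fin k)) ^ k := by simp
        _ ≤ (k ^ (2 * s)) ^ k := by
          simpa using Nat.pow_le_pow_left (card_relVecs_le (R := F) (ι := Fin k)) k
        _ = k ^ (2 * s * k) := (pow_mul _ _ _).symm
  · set e : Fin k → W := fun i ↦ (A.equivFinOfCardEq hA).symm i
    obtain ⟨x, hx, f, hf⟩ := hreps e (Subtype.val_injective.comp (Equiv.injective _))
    have he : Set.range e = A :=
      ((A.equivFinOfCardEq hA).symm.surjective.range_comp _).trans Subtype.range_coe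
    exact ⟨univ.image x, mem_image_of_mem _ hx, f, by simpa [he] using hf⟩

/-- The number of Freiman `s`-isomorphism classes of subsets of a vector space `W` of
cardinality `k` is at most `k^(2sk)`: there is a set of at most `k^(2sk)` representatives
such that every `k`-element subset of `W` is Freiman `s`-isomorphic to one of them. -/
theorem count_freiman_iso_classes {F W : Type*} [Field F] [AddCommGroup W] [Module F W]
    (s k : ℕ) (hs : 1 ≤ s) (hk : 1 ≤ k) :
    ∃ reps : Finset (Finset W), reps.card ≤ k ^ (2 * s * k) ∧
      ∀ A : Finset W, A.card = k →
        ∃ X ∈ reps, ∃ f : W → W, IsAddFreimanIso s (A : Set W) (X : Set W) f :=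
  count_freiman_iso_classes_general (F := F) s k hk
end

section
/- Let W, W' be finite-dimensional vector spaces over a field F and A ⊆ W a finite non-empty set of Freiman dimension r = r_F(A). Then there exist a_1,…,a_{r+1} ∈ A such that for any w_1',…,w_{r+1}' ∈ W' there is a unique Freiman 2-homomorphism φ : A → W' with φ(a_i) = w_i' for all i; moreover if w_1',…,w_{r+1}' are linearly independent then φ is a Freiman 2-isomorphism onto its image. -/
/-- The `F`-vector space of Freiman 2-homomorphisms from `A` to `F`. -/
def freimanHoms (F : Type*) [Field F] {G : Type*} [AddCommGroup G] (A : Set G) :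
    Submodule F (A → F) where
  carrier := {φ | ∀ a b c d : A, (a : G) + b = (c : G) + d → φ a + φ b = φ c + φ d}
  add_mem' := by
    intro f g hf hg a b c d h
    have h1 := hf a b c d h
    have h2 := hg a b c d h
    simp only [Pi.add_apply]
    linear_combination h1 + h2
  zero_mem' := by intro a b c d h; simp
  smul_mem' := by
    intro c f hf a b c' d h
    have h1 := hf a b c' d h
    simp only [Pi.smul_apply, smul_eq_mul]
    linear_combination c * h1

/-- The Freiman dimension `r_F(A) = dim Hom₂(A, F) − 1`. -/
noncomputable def freimanDim (F : Type*) [Field F] {G : Type*} [AddCommGroup G]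
    (A : Set G) : ℕ :=
  Module.finrank F (freimanHoms F A) - 1

/-- A Freiman 2-homomorphism from `A` (as a subtype) to an abelian group `H`. -/
def IsFreiman2HomOn {G H : Type*} [AddCommGroup G] [AddCommGroup H] (A : Set G)
    (φ : A → H) : Prop :=
  ∀ a b c d : A, (a : G) + b = (c : G) + d → φ a + φ b = φ c + φ d

/-! Hom₂(A, F) is a space of functions on the finite set A of dimension r + 1, and point
evaluations span its dual, so some r + 1 of them form a basis of the dual; the dual basis is a
Lagrange basis `dᵢ` of Hom₂(A, F) with `dᵢ (aⱼ) = δᵢⱼ`. A map `φ : A → W'` is a Freiman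
homomorphism iff every `f ∘ φ` with `f` a linear form is one, which gives existence
(`φ = ∑ dᵢ • w'ᵢ`) and uniqueness. If the `w'ᵢ` are independent, an additive relation among
values of `φ` holds for every `dᵢ`, hence on all of Hom₂(A, F); this space contains the
restrictions of linear forms on `W`, which separate points. -/

open Module

section

variable {F X ι : Type*} [Field F]

structure Submodule.IsLagrangeBasis [Fintype ι] [DecidableEq ι] (V : Submodule F (X → F))
    (a : ι → X) (d : ι → X → F) : Prop where
  mem : ∀ i, d i ∈ V
  apply_node : ∀ i j, d i (a j) = if i = j then 1 else 0
  eq_sum : ∀ ψ ∈ V, ψ = ∑ i, ψ (a i) • d i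

theorem Submodule.span_range_proj_comp_subtype_eq_top (V : Submodule F (X → F))
    [FiniteDimensional F V] :
    span F (Set.range fun x : X => LinearMap.proj x ∘ₗ V.subtype) = ⊤ := by
  refine span_eq_top_of_ne_zero fun ψ hψ => ?_
  obtain ⟨x, hx⟩ := Function.ne_iff.1 (Subtype.coe_ne_coe.2 hψ)
  exact ⟨_, ⟨x, rfl⟩, hx⟩

theorem Submodule.exists_isLagrangeBasis (V : Submodule F (X → F)) [FiniteDimensional F V] :
    ∃ (a : Fin (finrank F V) → X) (d : Fin (finrank F V) → X → F), V.IsLagrangeBasis a d := by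
  obtain ⟨κ, a, -, hspan, hli⟩ :=
    exists_linearIndependent' F fun x : X => LinearMap.proj x ∘ₗ V.subtype
  let B₀ : Basis κ F (Dual F V) :=
    Basis.mk hli (by rw [hspan, V.span_range_proj_comp_subtype_eq_top])
  let e := B₀.indexEquiv (finBasis F V).dualBasis
  let B := B₀.reindex e
  have hB : ∀ i (ψ : V), B i ψ = (ψ : X → F) (a (e.symm i)) := by
    intro i ψ; simp [B, B₀]
  let d i : V := (evalEquiv F V).symm (B.dualBasis i)
  have hd : ∀ i j, (d i : X → F) (a (e.symm j)) = if i = j then 1 else 0 := by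
    intro i j
    rw [← hB, apply_evalEquiv_symm_apply, B.dualBasis_apply_self]
    exact if_congr eq_comm rfl rfl
  refine ⟨a ∘ e.symm, fun i => d i, fun i => (d i).2, hd, fun ψ hψ => ?_⟩
  suffices (⟨ψ, hψ⟩ : V) = ∑ i, ψ (a (e.symm i)) • d i by
    simpa using congrArg Subtype.val this
  apply (evalEquiv F V).injective
  refine B.ext fun j => ?_
  simp [hB, hd]

variable {W' : Type*} [AddCommGroup W'] [Module F W']

namespace Submodule.IsLagrangeBasis

variable [Fintype ι] [DecidableEq ι] {V : Submodule F (X → F)} {a : ι → X} {d : ι → X → F}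

theorem injective (h : V.IsLagrangeBasis a d) : Function.Injective a := by
  intro i j hij
  have := h.apply_node i j
  rw [← hij, h.apply_node i i] at this
  simpa using this

theorem sum_smul_apply_node (h : V.IsLagrangeBasis a d) (w : ι → W') (j : ι) :
    ∑ i, d i (a j) • w i = w j := by
  simp [h.apply_node]

theorem eq_sum_smul (h : V.IsLagrangeBasis a d) {φ : X → W'}
    (hφ : ∀ f : Dual F W', f ∘ φ ∈ V) : φ = fun x => ∑ i, d i x • φ (a i) := by
  funext x
  rw [← sub_eq_zero, ← forall_dual_apply_eq_zero_iff F]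
  intro f
  have := congrFun (h.eq_sum _ (hφ f)) x
  simp only [Function.comp_apply, Finset.sum_apply, Pi.smul_apply, smul_eq_mul] at this
  simp [map_sum, this, mul_comm]

theorem apply_add_apply_eq_of_forall_basis (h : V.IsLagrangeBasis a d) {p q u v : X}
    (hd : ∀ i, d i p + d i q = d i u + d i v) {ψ : X → F} (hψ : ψ ∈ V) :
    ψ p + ψ q = ψ u + ψ v := by
  rw [h.eq_sum ψ hψ]
  simp only [Finset.sum_apply, Pi.smul_apply, smul_eq_mul, ← Finset.sum_add_distrib, ← mul_add, hd]

end Submodule.IsLagrangeBasis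

theorem IsFreiman2HomOn.comp_addMonoidHom {G H K : Type*} [AddCommGroup G] [AddCommGroup H]
    [AddCommGroup K] {A : Set G} {φ : A → H} (hφ : IsFreiman2HomOn A φ) (g : H →+ K) :
    IsFreiman2HomOn A (g ∘ φ) := by
  intro p q u v h
  simp only [Function.comp_apply, ← map_add, hφ p q u v h]

section Freiman

variable {G : Type*} [AddCommGroup G] {A : Set G}

theorem one_mem_freimanHoms : (fun _ => 1 : A → F) ∈ freimanHoms F A :=
  fun _ _ _ _ _ => rfl

theorem finrank_freimanHoms (hA : A.Finite) (hne : A.Nonempty) :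
    finrank F (freimanHoms F A) = freimanDim F A + 1 := by
  have := hA.to_subtype
  have : 0 < finrank F (freimanHoms F A) := by
    refine finrank_pos_iff_exists_ne_zero.2 ⟨⟨_, one_mem_freimanHoms⟩, fun h => ?_⟩
    simpa using congrFun (congrArg Subtype.val h) ⟨_, hne.some_mem⟩
  unfold freimanDim
  omega

theorem isFreiman2HomOn_sum_smul [Fintype ι] {d : ι → A → F} (hd : ∀ i, d i ∈ freimanHoms F A)
    (w : ι → W') : IsFreiman2HomOn A fun x => ∑ i, d i x • w i := by
  intro p q u v h
  simp only [← Finset.sum_add_distrib, ← add_smul, hd _ p q u v h]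

theorem add_eq_add_of_forall_freimanHoms [Module F G] {p q u v : A}
    (h : ∀ ψ ∈ freimanHoms F A, ψ p + ψ q = ψ u + ψ v) : (p : G) + q = u + v := by
  rw [← sub_eq_zero, ← forall_dual_apply_eq_zero_iff F]
  intro f
  have hf : (fun x : A => f x) ∈ freimanHoms F A := fun p q u v h => by
    simp only [← map_add, h]
  simp [h _ hf]

theorem Submodule.IsLagrangeBasis.add_eq_add_of_linearIndependent [Module F G] [Fintype ι]
    [DecidableEq ι] {a : ι → A} {d : ι → A → F} (h : (freimanHoms F A).IsLagrangeBasis a d)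
    {w : ι → W'} (hw : LinearIndependent F w) {p q u v : A}
    (hφ : ∑ i, d i p • w i + ∑ i, d i q • w i = ∑ i, d i u • w i + ∑ i, d i v • w i) :
    (p : G) + q = u + v := by
  have hd : ∀ i, d i p + d i q = d i u + d i v := by
    have := Fintype.linearIndependent_iff.1 hw (fun i => d i p + d i q - (d i u + d i v)) (by
      simp only [sub_smul, add_smul, Finset.sum_sub_distrib, Finset.sum_add_distrib, hφ, sub_self])
    exact fun i => sub_eq_zero.1 (this i)
  exact add_eq_add_of_forall_freimanHoms fun ψ hψ => h.apply_add_apply_eq_of_forall_basis hd hψ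

end Freiman

end

theorem freiman_hom_interpolation_general {F W W' : Type*} [Field F]
    [AddCommGroup W] [Module F W]
    [AddCommGroup W'] [Module F W']
    (A : Set W) (hA : A.Finite) (hne : A.Nonempty) (r : ℕ) (hr : r = freimanDim F A) :
    ∃ a : Fin (r + 1) → A, Function.Injective a ∧
      (∀ w' : Fin (r + 1) → W',
        ∃! φ : A → W', IsFreiman2HomOn A φ ∧ ∀ i, φ (a i) = w' i) ∧
      (∀ w' : Fin (r + 1) → W', LinearIndependent F w' →
        ∀ φ : A → W', IsFreiman2HomOn A φ → (∀ i, φ (a i) = w' i) →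
          Function.Injective φ ∧
            ∀ p q u v : A, ((p : W) + q = (u : W) + v ↔ φ p + φ q = φ u + φ v)) := by
  have := hA.to_subtype
  have hdim : finrank F (freimanHoms F A) = r + 1 := hr ▸ finrank_freimanHoms hA hne
  obtain ⟨a, d, hd⟩ := hdim ▸ (freimanHoms F A).exists_isLagrangeBasis
  have hφ_eq {φ : A → W'} (hφ : IsFreiman2HomOn A φ) : φ = fun x => ∑ i, d i x • φ (a i) :=
    hd.eq_sum_smul fun f => hφ.comp_addMonoidHom f.toAddMonoidHom
  refine ⟨a, hd.injective, fun w' => ⟨fun x => ∑ i, d i x • w' i,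
    ⟨isFreiman2HomOn_sum_smul hd.mem w', hd.sum_smul_apply_node w'⟩, ?_⟩, ?_⟩
  · rintro φ ⟨hφ, hφa⟩
    simpa only [hφa] using hφ_eq hφ
  · intro w' hw' φ hφ hφa
    have hiff (p q u v : A) : (p : W) + q = u + v ↔ φ p + φ q = φ u + φ v := by
      refine ⟨hφ p q u v, fun h => hd.add_eq_add_of_linearIndependent hw' ?_⟩
      rw [hφ_eq hφ] at h
      simpa only [hφa] using h
    exact ⟨fun p q hpq => Subtype.ext (add_right_cancel ((hiff p p q p).2 (by rw [hpq]))), hiff⟩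

/-- For `A ⊆ W` finite nonempty of Freiman dimension `r`, there are `a₁,…,a_{r+1} ∈ A`
such that any prescribed values `w'₁,…,w'_{r+1} ∈ W'` are attained by a unique Freiman
2-homomorphism `φ : A → W'`; moreover if the `w'ᵢ` are linearly independent then `φ` is a
Freiman 2-isomorphism onto its image. -/
theorem freiman_hom_interpolation {F W W' : Type*} [Field F]
    [AddCommGroup W] [Module F W] [FiniteDimensional F W]
    [AddCommGroup W'] [Module F W'] [FiniteDimensional F W']
    (A : Set W) (hA : A.Finite) (hne : A.Nonempty) (r : ℕ) (hr : r = freimanDim F A) :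
    ∃ a : Fin (r + 1) → A, Function.Injective a ∧
      (∀ w' : Fin (r + 1) → W',
        ∃! φ : A → W', IsFreiman2HomOn A φ ∧ ∀ i, φ (a i) = w' i) ∧
      (∀ w' : Fin (r + 1) → W', LinearIndependent F w' →
        ∀ φ : A → W', IsFreiman2HomOn A φ → (∀ i, φ (a i) = w' i) →
          Function.Injective φ ∧
            ∀ p q u v : A, ((p : W) + q = (u : W) + v ↔ φ p + φ q = φ u + φ v)) :=
  freiman_hom_interpolation_general A hA hne r hr
end

section
/- Let A be a subset of a vector space W over a field F with |A| = k sufficiently large, and let m = |A +̂ A|. Then there exist a* ∈ A and subsets A_0, A_1 ⊆ A such that |A_0| ≤ 4 k^{-1/15} m, |A \ A_1| ≤ 4 k^{-4/5} m, and a* + A_1 ⊆ A_0 +̂ A_0. -/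
/-- The restricted sumset `X +̂ X = {x + y : x, y ∈ X, x ≠ y}`. -/
def hatAdd {G : Type*} [AddCommGroup G] [DecidableEq G] (X : Finset G) : Finset G :=
  ((X ×ˢ X).filter fun p => p.1 ≠ p.2).image fun p => p.1 + p.2

universe u v

/-!
Put `u = k ^ (1/15)` and `T = ⌈u³⌉`, and call `x ∈ A` a popular partner of `a` when `a + x` has
at least `T` representations as a sum of two distinct elements of `A`. Double counting the pairs
`(a, x)` with unpopular sum `a + x` gives some `a*` with at most about `m / u¹²` unpopular partners;
the popular ones form `A₁`. For `x ∈ A₁` the representations `{b, a* + x - b}` of `a* + x` are at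
least `T / 2` pairwise disjoint pairs, so a random subset of `A` of density `1 / u` contains none of
them with probability at most `(1 - u⁻²) ^ (T / 2) ≤ exp (-u / 2)`. Adding one pair for each such
`x` costs at most `2 k exp (-u / 2) ≤ 1` elements in expectation, and gives `A₀` with
`|A₀| ≤ u¹⁴ + 1 ≤ 4 m / u`, because `m ≥ k - 1`.
-/

open Finset Real Filter

section Bernoulli

variable {α : Type*} [DecidableEq α]

/-- The expectation of `f S` for a random `S ⊆ A` that contains each element of `A`
independently with probability `p`. -/
noncomputable def bernoulliExp (p : ℝ) (A : Finset α) (f : Finset α → ℝ) : ℝ :=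
  ∑ S ∈ A.powerset, p ^ #S * (1 - p) ^ #(A \ S) * f S

variable {p : ℝ} {A B : Finset α}

lemma bernoulliExp_congr {f g : Finset α → ℝ} (h : ∀ S ⊆ A, f S = g S) :
    bernoulliExp p A f = bernoulliExp p A g :=
  sum_congr rfl fun S hS => by rw [h S (mem_powerset.1 hS)]

lemma bernoulliExp_add (f g : Finset α → ℝ) :
    bernoulliExp p A (fun S => f S + g S) = bernoulliExp p A f + bernoulliExp p A g := by
  simp only [bernoulliExp, mul_add, sum_add_distrib]

lemma bernoulliExp_const_mul (c : ℝ) (f : Finset α → ℝ) :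
    bernoulliExp p A (fun S => c * f S) = c * bernoulliExp p A f := by
  simp only [bernoulliExp, mul_sum]
  exact sum_congr rfl fun _ _ => by ring

lemma bernoulliExp_sum {ι : Type*} (X : Finset ι) (f : ι → Finset α → ℝ) :
    bernoulliExp p A (fun S => ∑ x ∈ X, f x S) = ∑ x ∈ X, bernoulliExp p A (f x) := by
  simp only [bernoulliExp, mul_sum]
  exact sum_comm

lemma sum_bernoulli_weight (p : ℝ) (A : Finset α) :
    ∑ S ∈ A.powerset, p ^ #S * (1 - p) ^ #(A \ S) = 1 := by
  simpa using (prod_add (fun _ => p) (fun _ => 1 - p) A).symm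

lemma bernoulliExp_const (c : ℝ) : bernoulliExp p A (fun _ => c) = c := by
  rw [bernoulliExp, ← sum_mul, sum_bernoulli_weight, one_mul]

lemma exists_le_bernoulliExp (hp₀ : 0 ≤ p) (hp₁ : p ≤ 1) (f : Finset α → ℝ) :
    ∃ S ⊆ A, f S ≤ bernoulliExp p A f := by
  obtain ⟨S, hS, hmin⟩ := exists_min_image A.powerset f ⟨∅, empty_mem_powerset A⟩
  refine ⟨S, mem_powerset.1 hS, ?_⟩
  calc f S = ∑ T ∈ A.powerset, p ^ #T * (1 - p) ^ #(A \ T) * f S := by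
        rw [← sum_mul, sum_bernoulli_weight, one_mul]
    _ ≤ bernoulliExp p A f := sum_le_sum fun T hT =>
        mul_le_mul_of_nonneg_left (hmin T hT) (by have := sub_nonneg.2 hp₁; positivity)

lemma bernoulliExp_indicator_subset_self :
    bernoulliExp p B (fun S => if B ⊆ S then 1 else 0) = p ^ #B := by
  rw [bernoulliExp, sum_eq_single_of_mem B (mem_powerset_self B)]
  · simp
  · intro S hS hSB
    have : ¬ B ⊆ S := fun h => hSB (Subset.antisymm (mem_powerset.1 hS) h)
    simp [this]

lemma bernoulliExp_mul_of_subset (hBA : B ⊆ A) (g h : Finset α → ℝ) :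
    bernoulliExp p A (fun S => g (S ∩ B) * h (S \ B)) =
      bernoulliExp p B g * bernoulliExp p (A \ B) h := by
  rw [bernoulliExp, bernoulliExp, bernoulliExp, sum_mul_sum, ← sum_product']
  refine sum_nbij' (fun S => (S ∩ B, S \ B)) (fun UV => UV.1 ∪ UV.2) ?_ ?_ ?_ ?_ ?_
  · intro S hS
    simp only [mem_product, mem_powerset] at hS ⊢
    grind
  · intro UV hUV
    simp only [mem_product, mem_powerset] at hUV ⊢
    grind
  · intro S hS
    exact sup_inf_sdiff S B
  · intro UV hUV
    simp only [mem_product, mem_powerset] at hUV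
    ext x <;> simp <;> grind
  · intro S hS
    rw [mem_powerset] at hS
    have h1 : #(S ∩ B) + #(S \ B) = #S := card_inter_add_card_sdiff S B
    have h2 : #(B \ (S ∩ B)) + #((A \ B) \ (S \ B)) = #(A \ S) := by
      rw [← card_union_of_disjoint (disjoint_sdiff.mono sdiff_subset sdiff_subset)]
      congr 1; grind
    rw [← h1, ← h2]
    ring

lemma bernoulliExp_indicator_not_subset_self :
    bernoulliExp p B (fun S => if B ⊆ S then 0 else 1) = 1 - p ^ #B := by
  have h := bernoulliExp_add (p := p) (A := B) (fun S => if B ⊆ S then 1 else 0)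
    (fun S => if B ⊆ S then 0 else 1)
  rw [bernoulliExp_indicator_subset_self,
    bernoulliExp_congr (g := fun _ => 1) fun S _ => by split_ifs <;> norm_num,
    bernoulliExp_const] at h
  linarith

lemma bernoulliExp_indicator_mem {a : α} (ha : a ∈ A) :
    bernoulliExp p A (fun S => if a ∈ S then 1 else 0) = p := by
  have h := bernoulliExp_mul_of_subset (p := p) (singleton_subset_iff.2 ha)
    (fun U => if {a} ⊆ U then 1 else 0) (fun _ => 1)
  rw [bernoulliExp_indicator_subset_self, bernoulliExp_const, card_singleton, pow_one,
    mul_one] at h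
  refine (bernoulliExp_congr fun S _ => ?_).trans h
  simp

lemma bernoulliExp_card : bernoulliExp p A (fun S => (#S : ℝ)) = p * #A := by
  rw [bernoulliExp_congr (g := fun S => ∑ a ∈ A, if a ∈ S then 1 else 0), bernoulliExp_sum,
    sum_congr rfl fun a ha => bernoulliExp_indicator_mem ha, sum_const, nsmul_eq_mul, mul_comm]
  intro S hS
  rw [sum_boole, filter_mem_eq_inter, inter_eq_right.2 hS]

lemma bernoulliExp_forall_not_subset {Bs : Finset (Finset α)} (hBA : ∀ B ∈ Bs, B ⊆ A)
    (hdisj : (Bs : Set (Finset α)).PairwiseDisjoint id) :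
    bernoulliExp p A (fun S => if ∀ B ∈ Bs, ¬ B ⊆ S then 1 else 0) = ∏ B ∈ Bs, (1 - p ^ #B) := by
  induction Bs using Finset.induction_on generalizing A with
  | empty => simp [bernoulliExp_const]
  | @insert B Bs hB ih =>
    rw [coe_insert, Set.pairwiseDisjoint_insert_of_notMem (by simpa using hB)] at hdisj
    have hBA' : ∀ B' ∈ Bs, B' ⊆ A \ B := fun B' hB' =>
      subset_sdiff.2 ⟨hBA B' (mem_insert_of_mem hB'), (hdisj.2 B' hB').symm⟩
    have hsplit : ∀ S ⊆ A, (if ∀ B' ∈ insert B Bs, ¬ B' ⊆ S then (1 : ℝ) else 0) =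
        (if B ⊆ S ∩ B then 0 else 1) * (if ∀ B' ∈ Bs, ¬ B' ⊆ S \ B then 1 else 0) := by
      intro S _
      have hB' : ∀ B' ∈ Bs, B' ⊆ S \ B ↔ B' ⊆ S := fun B' hB' =>
        ⟨fun h => h.trans sdiff_subset,
          fun h => subset_sdiff.2 ⟨h, (subset_sdiff.1 (hBA' B' hB')).2⟩⟩
      simp only [forall_mem_insert, subset_inter_iff, subset_refl, and_true]
      split_ifs <;> simp_all
    rw [bernoulliExp_congr hsplit, bernoulliExp_mul_of_subset (hBA B (mem_insert_self B Bs))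
      (fun U => if B ⊆ U then 0 else 1) (fun U => if ∀ B' ∈ Bs, ¬ B' ⊆ U then 1 else 0),
      bernoulliExp_indicator_not_subset_self, ih hBA' hdisj.1, prod_insert hB]

lemma exists_small_subset_forall_exists_subset {ι : Type*} (X : Finset ι)
    (Bs : ι → Finset (Finset α)) (hp₀ : 0 ≤ p) (hp₁ : p ≤ 1)
    (hBA : ∀ x ∈ X, ∀ B ∈ Bs x, B ⊆ A) (hcard : ∀ x ∈ X, ∀ B ∈ Bs x, #B = 2)
    (hdisj : ∀ x ∈ X, (Bs x : Set (Finset α)).PairwiseDisjoint id)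
    (hne : ∀ x ∈ X, (Bs x).Nonempty) :
    ∃ S ⊆ A, (∀ x ∈ X, ∃ B ∈ Bs x, B ⊆ S) ∧
      #S ≤ p * #A + 2 * ∑ x ∈ X, (1 - p ^ 2) ^ #(Bs x) := by
  set missed : Finset α → Finset ι := fun S => X.filter fun x => ∀ B ∈ Bs x, ¬ B ⊆ S
  have hexp : bernoulliExp p A (fun S => #S + 2 * #(missed S)) =
      p * #A + 2 * ∑ x ∈ X, (1 - p ^ 2) ^ #(Bs x) := by
    simp only [missed, card_filter, Nat.cast_sum, Nat.cast_ite, Nat.cast_one, Nat.cast_zero,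
      mul_sum]
    rw [bernoulliExp_add, bernoulliExp_card, bernoulliExp_sum]
    refine congrArg _ (sum_congr rfl fun x hx => ?_)
    rw [bernoulliExp_const_mul, bernoulliExp_forall_not_subset (hBA x hx) (hdisj x hx),
      prod_congr rfl fun B hB => by rw [hcard x hx B hB], prod_const]
  obtain ⟨S, hSA, hS⟩ := exists_le_bernoulliExp (A := A) hp₀ hp₁ fun S => #S + 2 * (#(missed S) : ℝ)
  choose! pick hpick using hne
  have hmissed : ∀ x ∈ missed S, x ∈ X := fun x hx => (mem_filter.1 hx).1
  refine ⟨S ∪ (missed S).biUnion pick, union_subset hSA <| biUnion_subset.2 fun x hx =>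
    hBA x (hmissed x hx) _ (hpick x (hmissed x hx)), fun x hx => ?_, ?_⟩
  · by_cases h : x ∈ missed S
    · exact ⟨pick x, hpick x hx, (subset_biUnion_of_mem pick h).trans subset_union_right⟩
    · obtain ⟨B, hB, hBS⟩ : ∃ B ∈ Bs x, B ⊆ S := by simpa [missed, hx] using h
      exact ⟨B, hB, hBS.trans subset_union_left⟩
  · have hcard_le : #(S ∪ (missed S).biUnion pick) ≤ #S + 2 * #(missed S) :=
      calc #(S ∪ (missed S).biUnion pick) ≤ #S + ∑ x ∈ missed S, #(pick x) :=
            (card_union_le _ _).trans (Nat.add_le_add_left card_biUnion_le _)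
        _ = #S + 2 * #(missed S) := by
            rw [sum_congr rfl fun x hx => hcard x (hmissed x hx) _ (hpick x (hmissed x hx)),
              sum_const, smul_eq_mul, mul_comm]
    calc (#(S ∪ (missed S).biUnion pick) : ℝ) ≤ #S + 2 * (#(missed S) : ℝ) := by
          exact_mod_cast hcard_le
      _ ≤ _ := hS
      _ = _ := hexp

end Bernoulli

section HatAdd

variable {G : Type*} [AddCommGroup G] [DecidableEq G] {A : Finset G}

lemma add_mem_hatAdd {a b : G} (ha : a ∈ A) (hb : b ∈ A) (hab : a ≠ b) : a + b ∈ hatAdd A :=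
  mem_image.2 ⟨(a, b), mem_filter.2 ⟨mem_product.2 ⟨ha, hb⟩, hab⟩, rfl⟩

lemma card_sub_one_le_card_hatAdd (A : Finset G) : #A - 1 ≤ #(hatAdd A) := by
  rcases A.eq_empty_or_nonempty with rfl | ⟨a, ha⟩
  · simp
  rw [← card_erase_of_mem ha]
  exact card_le_card_of_injOn (a + ·)
    (fun x hx => add_mem_hatAdd ha (mem_of_mem_erase hx) (ne_of_mem_erase hx).symm)
    fun x _ y _ h => add_left_cancel h

def hatAddReprs (A : Finset G) (s : G) : Finset (G × G) :=
  A.offDiag.filter fun q => q.1 + q.2 = s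

def popularPartners (A : Finset G) (T : ℕ) (a : G) : Finset G :=
  A.filter fun x => T ≤ #(hatAddReprs A (a + x))

lemma sum_card_sdiff_popularPartners_le (A : Finset G) (T : ℕ) :
    ∑ a ∈ A, #(A \ popularPartners A T a) ≤ #A + #(hatAdd A) * (T - 1) := by
  set P : G × G → Prop := fun q => #(hatAddReprs A (q.1 + q.2)) < T
  have hsum : ∑ a ∈ A, #(A \ popularPartners A T a) = #((A ×ˢ A).filter P) := by
    simp only [popularPartners, ← filter_not, not_le, card_filter, sum_product, P]
  have hoff : #(A.offDiag.filter P) ≤ #(hatAdd A) * (T - 1) := by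
    rw [mul_comm]
    refine card_le_mul_card_image_of_maps_to (f := fun q => q.1 + q.2) (fun q hq => ?_) _
      fun s _ => ?_
    · obtain ⟨h₁, h₂, h₁₂⟩ := mem_offDiag.1 (mem_filter.1 hq).1
      exact add_mem_hatAdd h₁ h₂ h₁₂
    · rcases ((A.offDiag.filter P).filter fun q => q.1 + q.2 = s).eq_empty_or_nonempty
        with h | ⟨q, hq⟩
      · simp [h]
      have hsub : ((A.offDiag.filter P).filter fun q => q.1 + q.2 = s) ⊆ hatAddReprs A s :=
        fun q hq => by simp only [hatAddReprs, mem_filter] at hq ⊢; exact ⟨hq.1.1, hq.2⟩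
      simp only [mem_filter] at hq
      have hs : #(hatAddReprs A s) < T := hq.2 ▸ hq.1.2
      have := card_le_card hsub
      omega
  rw [hsum, ← diag_union_offDiag, filter_union]
  exact (card_union_le _ _).trans (add_le_add ((card_filter_le _ _).trans (diag_card A).le) hoff)

lemma exists_card_mul_card_sdiff_popularPartners_le (hA : A.Nonempty) (T : ℕ) :
    ∃ a ∈ A, #A * #(A \ popularPartners A T a) ≤ #A + #(hatAdd A) * (T - 1) := by
  obtain ⟨a, ha, hmin⟩ := exists_min_image A (fun a => #(A \ popularPartners A T a)) hA
  exact ⟨a, ha, (card_nsmul_le_sum A _ _ hmin).trans (sum_card_sdiff_popularPartners_le A T)⟩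

def hatAddPairs (A : Finset G) (s : G) : Finset (Finset G) :=
  (hatAddReprs A s).image fun q => {q.1, q.2}

lemma mem_hatAddPairs {s : G} {B : Finset G} :
    B ∈ hatAddPairs A s ↔ ∃ b ∈ A, ∃ c ∈ A, b ≠ c ∧ b + c = s ∧ B = {b, c} := by
  simp [hatAddPairs, hatAddReprs, mem_offDiag, eq_comm, and_assoc]

lemma pairwiseDisjoint_hatAddPairs (A : Finset G) (s : G) :
    (hatAddPairs A s : Set (Finset G)).PairwiseDisjoint id := by
  have hpair : ∀ B ∈ hatAddPairs A s, ∀ e ∈ B, B = {e, s - e} := by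
    intro B hB e he
    obtain ⟨b, -, c, -, -, rfl, rfl⟩ := mem_hatAddPairs.1 hB
    rcases mem_insert.1 he with rfl | he
    · rw [add_sub_cancel_left]
    · rw [mem_singleton.1 he, add_sub_cancel_right, pair_comm]
  intro B₁ h₁ B₂ h₂ hne
  exact disjoint_left.2 fun e he₁ he₂ => hne ((hpair _ h₁ e he₁).trans (hpair _ h₂ e he₂).symm)

lemma card_hatAddReprs_le (A : Finset G) (s : G) :
    #(hatAddReprs A s) ≤ 2 * #(hatAddPairs A s) := by
  refine card_le_mul_card_image _ 2 fun B hB => ?_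
  obtain ⟨b, -, c, -, hbc, -, rfl⟩ := mem_hatAddPairs.1 hB
  rw [← card_pair hbc]
  refine card_le_card_of_injOn Prod.fst (fun q hq => ?_) fun q hq q' hq' h => ?_
  · rw [← (mem_filter.1 hq).2]
    exact mem_insert_self _ _
  · have hq₁ := (mem_filter.1 (mem_filter.1 hq).1).2
    have hq₁' := (mem_filter.1 (mem_filter.1 hq').1).2
    exact Prod.ext h (add_left_cancel (h ▸ hq₁.trans hq₁'.symm))

lemma exists_small_subset_forall_popularPartners_mem_hatAdd (A : Finset G) (a : G) {T : ℕ}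
    (hT : 0 < T) {p : ℝ} (hp₀ : 0 ≤ p) (hp₁ : p ≤ 1) :
    ∃ A₀ ⊆ A, (∀ x ∈ popularPartners A T a, a + x ∈ hatAdd A₀) ∧
      #A₀ ≤ p * #A + 2 * #A * exp (-(p ^ 2 * T / 2)) := by
  have hreprs : ∀ x ∈ popularPartners A T a, T ≤ 2 * #(hatAddPairs A (a + x)) :=
    fun x hx => (mem_filter.1 hx).2.trans (card_hatAddReprs_le A _)
  obtain ⟨A₀, hA₀, hcover, hcard⟩ := exists_small_subset_forall_exists_subset
    (popularPartners A T a) (fun x => hatAddPairs A (a + x)) hp₀ hp₁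
    (fun x _ B hB => by
      obtain ⟨b, hb, c, hc, -, -, rfl⟩ := mem_hatAddPairs.1 hB
      exact insert_subset hb (singleton_subset_iff.2 hc))
    (fun x _ B hB => by
      obtain ⟨b, -, c, -, hbc, -, rfl⟩ := mem_hatAddPairs.1 hB
      exact card_pair hbc)
    (fun x _ => pairwiseDisjoint_hatAddPairs A _)
    (fun x hx => card_pos.1 (by have := hreprs x hx; omega))
  refine ⟨A₀, hA₀, fun x hx => ?_, hcard.trans ?_⟩
  · obtain ⟨B, hB, hBA₀⟩ := hcover x hx
    obtain ⟨b, -, c, -, hbc, hs, rfl⟩ := mem_hatAddPairs.1 hB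
    exact hs ▸ add_mem_hatAdd (hBA₀ (mem_insert_self _ _)) (hBA₀ (by simp)) hbc
  have hdecay : ∀ x ∈ popularPartners A T a,
      (1 - p ^ 2) ^ #(hatAddPairs A (a + x)) ≤ exp (-(p ^ 2 * T / 2)) := by
    intro x hx
    have hT' : (T : ℝ) ≤ 2 * #(hatAddPairs A (a + x)) := by exact_mod_cast hreprs x hx
    calc (1 - p ^ 2) ^ #(hatAddPairs A (a + x))
        ≤ exp (-p ^ 2) ^ #(hatAddPairs A (a + x)) :=
          pow_le_pow_left₀ (by nlinarith) (one_sub_le_exp_neg _) _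
      _ = exp (-(p ^ 2 * #(hatAddPairs A (a + x)))) := by rw [← exp_nat_mul]; ring_nf
      _ ≤ exp (-(p ^ 2 * T / 2)) := exp_le_exp.2 (by nlinarith)
  have hsum := (sum_le_sum hdecay).trans_eq (sum_const _)
  have hX : (#(popularPartners A T a) : ℝ) ≤ #A := by exact_mod_cast card_filter_le _ _
  rw [nsmul_eq_mul] at hsum
  nlinarith [exp_pos (-(p ^ 2 * T / 2))]

end HatAdd

lemma eventually_two_le_and_two_mul_pow_le_exp :
    ∀ᶠ u : ℝ in atTop, 2 ≤ u ∧ 2 * u ^ 15 ≤ exp (u / 2) := by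
  refine (eventually_ge_atTop 2).and <|
    ((isLittleO_pow_exp_pos_mul_atTop 15 (by norm_num : (0 : ℝ) < 1 / 2)).bound
      (by norm_num : (0 : ℝ) < 1 / 2)).mono fun u hu => ?_
  rw [Real.norm_eq_abs, Real.norm_eq_abs, abs_exp] at hu
  have := le_abs_self (u ^ 15)
  rw [div_eq_inv_mul, ← one_div]
  linarith

theorem exists_small_generating_subset_of_card_eq_pow {G : Type*} [AddCommGroup G]
    [DecidableEq G] (A : Finset G) {u : ℝ} (hu : 2 ≤ u) (hA : (#A : ℝ) = u ^ 15)
    (hexp : 2 * u ^ 15 ≤ exp (u / 2)) :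
    ∃ a ∈ A, ∃ A₀ A₁ : Finset G, A₀ ⊆ A ∧ A₁ ⊆ A ∧
      (#A₀ : ℝ) ≤ 4 * u⁻¹ * #(hatAdd A) ∧ (#(A \ A₁) : ℝ) ≤ 4 * (u ^ 12)⁻¹ * #(hatAdd A) ∧
      ∀ x ∈ A₁, a + x ∈ hatAdd A₀ := by
  have hu₀ : 0 < u := by linarith
  have hm : u ^ 15 ≤ #(hatAdd A) + 1 := by
    have := card_sub_one_le_card_hatAdd A
    rw [← hA]
    exact_mod_cast (by omega : #A ≤ #(hatAdd A) + 1)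
  have hu12 : u ^ 12 + 1 ≤ u ^ 15 := by
    have h₁ : 1 ≤ u ^ 12 := one_le_pow₀ (by linarith)
    have h₃ : 2 ^ 3 ≤ u ^ 3 := pow_le_pow_left₀ (by norm_num) hu 3
    nlinarith
  have hA₀ : A.Nonempty := card_pos.1 (by exact_mod_cast hA ▸ pow_pos hu₀ 15)
  set T := ⌈u ^ 3⌉₊
  have hT₀ : 0 < T := Nat.ceil_pos.2 (pow_pos hu₀ 3)
  have hTu : u ^ 3 ≤ T := Nat.le_ceil _
  have hTu' : (T : ℝ) - 1 < u ^ 3 := by linarith [Nat.ceil_lt_add_one (pow_pos hu₀ 3).le]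
  obtain ⟨a, ha, hL⟩ := exists_card_mul_card_sdiff_popularPartners_le hA₀ T
  obtain ⟨A₀, hA₀A, hcover, hA₀⟩ := exists_small_subset_forall_popularPartners_mem_hatAdd A a hT₀
    (inv_nonneg.2 hu₀.le) (inv_le_one_of_one_le₀ (by linarith))
  refine ⟨a, ha, A₀, popularPartners A T a, hA₀A, filter_subset _ _, ?_, ?_, hcover⟩
  · have hdecay : 2 * #A * exp (-(u⁻¹ ^ 2 * T / 2)) ≤ 1 := by
      have hu : u ≤ u⁻¹ ^ 2 * T := by
        rw [inv_pow, ← div_eq_inv_mul, le_div_iff₀ (by positivity)]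
        nlinarith
      calc 2 * #A * exp (-(u⁻¹ ^ 2 * T / 2)) ≤ 2 * u ^ 15 * exp (-(u / 2)) := by
            rw [hA]; gcongr
        _ ≤ 1 := by
            rw [exp_neg, ← div_eq_mul_inv, div_le_one (exp_pos _)]
            exact hexp
    have hpk : u⁻¹ * #A = u ^ 14 := by
      rw [hA]; field_simp
    rw [mul_right_comm, ← div_eq_mul_inv, le_div_iff₀ hu₀]
    have : u ≤ u ^ 15 := le_self_pow₀ (by linarith) (by norm_num)
    nlinarith
  · have hL' : (#A : ℝ) * #(A \ popularPartners A T a) ≤ #A + #(hatAdd A) * ((T : ℝ) - 1) := by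
      have := (Nat.cast_le (α := ℝ)).2 hL
      push_cast [Nat.cast_sub hT₀] at this
      exact this
    rw [mul_right_comm, ← div_eq_mul_inv, le_div_iff₀ (by positivity)]
    have hm₀ : (0 : ℝ) ≤ #(hatAdd A) := Nat.cast_nonneg _
    have : u ^ 3 * (#(A \ popularPartners A T a) * u ^ 12) ≤ u ^ 3 * (u ^ 12 + #(hatAdd A)) := by
      nlinarith
    nlinarith [le_of_mul_le_mul_left this (by positivity)]

/-- For `A` a subset of a vector space with `|A| = k` large and `m = |A +̂ A|`, there are
`a* ∈ A` and `A₀, A₁ ⊆ A` with `|A₀| ≤ 4 k^{-1/15} m`, `|A \ A₁| ≤ 4 k^{-4/5} m` and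
`a* + A₁ ⊆ A₀ +̂ A₀`. -/
theorem exists_small_generating_subset :
    ∃ k₀ : ℕ, ∀ (F : Type u) (W : Type v) [Field F] [AddCommGroup W] [Module F W]
      [DecidableEq W] (A : Finset W), k₀ ≤ A.card →
      ∃ a : W, a ∈ A ∧ ∃ A₀ A₁ : Finset W, A₀ ⊆ A ∧ A₁ ⊆ A ∧
        ((A₀.card : ℝ) ≤ 4 * (A.card : ℝ) ^ (-(1 / 15 : ℝ)) * (hatAdd A).card) ∧
        (((A \ A₁).card : ℝ) ≤ 4 * (A.card : ℝ) ^ (-(4 / 5 : ℝ)) * (hatAdd A).card) ∧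
        ∀ x ∈ A₁, a + x ∈ hatAdd A₀ := by
  have hroot : Tendsto (fun k : ℕ => (k : ℝ) ^ (1 / 15 : ℝ)) atTop atTop :=
    (tendsto_rpow_atTop (by norm_num)).comp tendsto_natCast_atTop_atTop
  obtain ⟨k₀, hk₀⟩ := eventually_atTop.1 (hroot.eventually eventually_two_le_and_two_mul_pow_le_exp)
  refine ⟨k₀, fun F W _ _ _ _ A hA => ?_⟩
  obtain ⟨hu, hexp⟩ := hk₀ _ hA
  have hk : (0 : ℝ) ≤ #A := Nat.cast_nonneg _
  have hpow : ∀ n : ℕ, ((#A : ℝ) ^ (1 / 15 : ℝ)) ^ n = (#A : ℝ) ^ (n / 15 : ℝ) := fun n => by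
    rw [← rpow_natCast, ← rpow_mul hk]; ring_nf
  rw [rpow_neg hk, rpow_neg hk, show (4 / 5 : ℝ) = (12 : ℕ) / 15 by norm_num, ← hpow]
  exact exists_small_generating_subset_of_card_eq_pow A hu (by rw [hpow]; norm_num) hexp
end

section
/- If X and X' are finite subsets of abelian groups with X Freiman 6-isomorphic to X', then X +̂ X is Freiman 3-isomorphic to X' +̂ X', and moreover every subset B of X +̂ X is Freiman 3-isomorphic to a subset of X' +̂ X'. -/
open Set

section HatAdd

variable {G G' : Type*} [AddCommGroup G] [AddCommGroup G'] [DecidableEq G]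

lemma mem_hatAdd {X : Finset G} {b : G} : b ∈ hatAdd X ↔ ∃ p ∈ X.offDiag, p.1 + p.2 = b := by
  simp only [hatAdd, Finset.mem_image, Finset.mem_filter, Finset.mem_product, Finset.mem_offDiag,
    and_assoc]

noncomputable def hatAddSplit (X : Finset G) (b : G) : G × G :=
  if h : b ∈ hatAdd X then (mem_hatAdd.1 h).choose else 0

section Split

variable {X : Finset G} {b : G}

lemma hatAddSplit_mem_offDiag (hb : b ∈ hatAdd X) : hatAddSplit X b ∈ X.offDiag := by
  rw [hatAddSplit, dif_pos hb]
  exact (mem_hatAdd.1 hb).choose_spec.1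

lemma hatAddSplit_add (hb : b ∈ hatAdd X) : (hatAddSplit X b).1 + (hatAddSplit X b).2 = b := by
  rw [hatAddSplit, dif_pos hb]
  exact (mem_hatAdd.1 hb).choose_spec.2

end Split

noncomputable def hatAddMap (f : G → G') (X : Finset G) (b : G) : G' :=
  f (hatAddSplit X b).1 + f (hatAddSplit X b).2

lemma hatAddMap_add {f : G → G'} {X : Finset G} {B : Set G'}
    (hf : IsAddFreimanHom 2 (X : Set G) B f) {x y : G} (hx : x ∈ X) (hy : y ∈ X) (hxy : x ≠ y) :
    hatAddMap f X (x + y) = f x + f y := by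
  have hb : x + y ∈ hatAdd X := mem_hatAdd.2 ⟨(x, y), Finset.mem_offDiag.2 ⟨hx, hy, hxy⟩, rfl⟩
  obtain ⟨hu, hv, -⟩ := Finset.mem_offDiag.1 (hatAddSplit_mem_offDiag hb)
  exact hf.add_eq_add hu hv hx hy (hatAddSplit_add hb)

lemma bijOn_hatAddMap [DecidableEq G'] {f : G → G'} {X : Finset G} {X' : Finset G'}
    (hf : IsAddFreimanIso 2 (X : Set G) X' f) :
    BijOn (hatAddMap f X) (hatAdd X : Set G) (hatAdd X' : Set G') := by
  have hsplit : ∀ ⦃b⦄, b ∈ hatAdd X → (hatAddSplit X b).1 ∈ X ∧ (hatAddSplit X b).2 ∈ X ∧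
      (hatAddSplit X b).1 ≠ (hatAddSplit X b).2 :=
    fun b hb => Finset.mem_offDiag.1 (hatAddSplit_mem_offDiag hb)
  refine ⟨fun b hb => ?_, fun b hb c hc hbc => ?_, fun b' hb' => ?_⟩
  · obtain ⟨hu, hv, huv⟩ := hsplit hb
    refine mem_hatAdd.2 ⟨(f (hatAddSplit X b).1, f (hatAddSplit X b).2), ?_, rfl⟩
    exact Finset.mem_offDiag.2
      ⟨hf.bijOn.mapsTo hu, hf.bijOn.mapsTo hv, hf.bijOn.injOn.ne hu hv huv⟩
  · obtain ⟨hbu, hbv, -⟩ := hsplit hb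
    obtain ⟨hcu, hcv, -⟩ := hsplit hc
    rwa [← hatAddSplit_add (X := X) hb, ← hatAddSplit_add (X := X) hc,
      ← hf.add_eq_add hbu hbv hcu hcv]
  · obtain ⟨⟨x', y'⟩, hp, rfl⟩ := mem_hatAdd.1 (Finset.mem_coe.1 hb')
    obtain ⟨hx', hy', hxy'⟩ := Finset.mem_offDiag.1 hp
    obtain ⟨x, hx, rfl⟩ := hf.bijOn.surjOn hx'
    obtain ⟨y, hy, rfl⟩ := hf.bijOn.surjOn hy'
    have hxy : x ≠ y := fun h => hxy' (congrArg f h)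
    exact ⟨x + y, mem_hatAdd.2 ⟨(x, y), Finset.mem_offDiag.2 ⟨hx, hy, hxy⟩, rfl⟩,
      hatAddMap_add hf.isAddFreimanHom hx hy hxy⟩

noncomputable def hatAddSummands (X : Finset G) (s : Multiset G) : Multiset G :=
  s.bind fun b => {(hatAddSplit X b).1, (hatAddSplit X b).2}

section Summands

variable {X : Finset G} {s : Multiset G}

lemma card_hatAddSummands : Multiset.card (hatAddSummands X s) = 2 * Multiset.card s := by
  simp [hatAddSummands, two_mul]

lemma mem_of_mem_hatAddSummands (hs : ∀ ⦃b⦄, b ∈ s → b ∈ hatAdd X) ⦃x : G⦄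
    (hx : x ∈ hatAddSummands X s) : x ∈ X := by
  obtain ⟨b, hb, hxb⟩ := Multiset.mem_bind.1 hx
  obtain ⟨hu, hv, -⟩ := Finset.mem_offDiag.1 (hatAddSplit_mem_offDiag (hs hb))
  simp only [Multiset.insert_eq_cons, Multiset.mem_cons, Multiset.mem_singleton] at hxb
  rcases hxb with rfl | rfl
  exacts [hu, hv]

lemma sum_hatAddSummands (hs : ∀ ⦃b⦄, b ∈ s → b ∈ hatAdd X) :
    (hatAddSummands X s).sum = s.sum := by
  rw [hatAddSummands, Multiset.sum_bind]
  conv_rhs => rw [← Multiset.map_id s]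
  refine congrArg Multiset.sum (Multiset.map_congr rfl fun b hb => ?_)
  simp [hatAddSplit_add (hs hb)]

lemma sum_map_hatAddSummands (f : G → G') :
    ((hatAddSummands X s).map f).sum = (s.map (hatAddMap f X)).sum := by
  simp only [hatAddSummands, Multiset.map_bind, Multiset.sum_bind, Multiset.insert_eq_cons,
    Multiset.map_cons, Multiset.map_singleton, Multiset.sum_cons, Multiset.sum_singleton]
  rfl

end Summands

theorem IsAddFreimanIso.hatAdd [DecidableEq G'] {n : ℕ} (hn : n ≠ 0) {f : G → G'} {X : Finset G}
    {X' : Finset G'} (hf : IsAddFreimanIso (2 * n) (X : Set G) X' f) :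
    IsAddFreimanIso n (hatAdd X : Set G) (hatAdd X' : Set G') (hatAddMap f X) := by
  refine ⟨bijOn_hatAddMap (hf.mono (hmn := by omega)), fun s t hs ht hsn htn => ?_⟩
  rw [← sum_map_hatAddSummands, ← sum_map_hatAddSummands, ← sum_hatAddSummands hs,
    ← sum_hatAddSummands ht]
  exact hf.map_sum_eq_map_sum (mem_of_mem_hatAddSummands hs) (mem_of_mem_hatAddSummands ht)
    (by rw [card_hatAddSummands, hsn]) (by rw [card_hatAddSummands, htn])

end HatAdd

/-- If `X ≅₆ X'` then `X +̂ X ≅₃ X' +̂ X'`, and every `B ⊆ X +̂ X` is Freiman 3-isomorphic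
to some subset of `X' +̂ X'`. -/
theorem hatAdd_freiman_iso {G G' : Type*} [AddCommGroup G] [AddCommGroup G']
    [DecidableEq G] [DecidableEq G'] (X : Finset G) (X' : Finset G') (f : G → G')
    (hf : IsAddFreimanIso 6 (X : Set G) (X' : Set G') f) :
    (∃ g : G → G', IsAddFreimanIso 3 (hatAdd X : Set G) (hatAdd X' : Set G') g) ∧
      ∀ B : Finset G, B ⊆ hatAdd X →
        ∃ C : Finset G', C ⊆ hatAdd X' ∧
          ∃ g : G → G', IsAddFreimanIso 3 (B : Set G) (C : Set G') g := by
  have hiso := IsAddFreimanIso.hatAdd three_ne_zero (hf : IsAddFreimanIso (2 * 3) _ _ f)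
  refine ⟨⟨hatAddMap f X, hiso⟩, fun B hB => ⟨B.image (hatAddMap f X), ?_, hatAddMap f X, ?_⟩⟩
  · exact Finset.image_subset_iff.2 fun b hb => hiso.bijOn.mapsTo (hB hb)
  · have hB' : (B : Set G) ⊆ hatAdd X := Finset.coe_subset.2 hB
    rw [Finset.coe_image]
    exact hiso.subset hB' (hiso.bijOn.injOn.mono hB').bijOn_image
end

section
/- Let A be a subset of an abelian group with |A| = k sufficiently large, and let 0 < ε be sufficiently small. Then there is a subset B ⊆ A with |B| ≤ (3 log(1/ε)/ε) √k and |B +̂ B| ≥ (1 − ε) k. -/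
universe u

set_option maxHeartbeats 1000000

open Finset

lemma hatAdd_mono {G : Type*} [AddCommGroup G] [DecidableEq G] {X Y : Finset G}
    (h : X ⊆ Y) : hatAdd X ⊆ hatAdd Y :=
  Finset.image_subset_image (Finset.filter_subset_filter _ (Finset.product_subset_product h h))

lemma hatAdd_insert_card {G : Type*} [AddCommGroup G] [DecidableEq G] {B : Finset G}
    {a : G} (ha : a ∉ B) :
    (hatAdd B).card + (B.filter fun b => a + b ∉ hatAdd B).card
      ≤ (hatAdd (insert a B)).card := by
  have hsub1 : hatAdd B ⊆ hatAdd (insert a B) := hatAdd_mono (subset_insert a B)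
  have hsub2 : (B.filter fun b => a + b ∉ hatAdd B).image (a + ·) ⊆ hatAdd (insert a B) := by
    intro x hx
    simp only [mem_image, mem_filter] at hx
    obtain ⟨b, ⟨hb, -⟩, rfl⟩ := hx
    refine Finset.mem_image.2 ⟨(a, b), ?_, rfl⟩
    refine Finset.mem_filter.2 ⟨Finset.mem_product.2
      ⟨mem_insert_self _ _, mem_insert_of_mem hb⟩, ?_⟩
    intro h
    exact ha ((show a = b from h) ▸ hb)
  have hdisj : Disjoint (hatAdd B) ((B.filter fun b => a + b ∉ hatAdd B).image (a + ·)) := by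
    rw [Finset.disjoint_right]
    intro x hx
    simp only [mem_image, mem_filter] at hx
    obtain ⟨b, ⟨-, hb2⟩, rfl⟩ := hx
    exact hb2
  calc (hatAdd B).card + (B.filter fun b => a + b ∉ hatAdd B).card
      = ((hatAdd B) ∪ (B.filter fun b => a + b ∉ hatAdd B).image (a + ·)).card := by
        rw [Finset.card_union_of_disjoint hdisj,
          Finset.card_image_of_injective _ (add_right_injective a)]
    _ ≤ _ := Finset.card_le_card (Finset.union_subset hsub1 hsub2)

lemma exists_good_element {G : Type*} [AddCommGroup G] [DecidableEq G]
    {A B : Finset G} (hBA : B ⊆ A) (hlt : B.card < A.card) :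
    ∃ a ∈ A \ B, (A.card - B.card) * ((B.filter fun b => a + b ∈ hatAdd B).card)
      ≤ B.card * (hatAdd B).card := by
  set S := hatAdd B with hS
  have hcardsd : (A \ B).card = A.card - B.card := Finset.card_sdiff_of_subset hBA
  have hne : (A \ B).Nonempty := by
    rw [← Finset.card_pos, hcardsd]; omega
  have hsum : (∑ a ∈ A \ B, (B.filter fun b => a + b ∈ S).card)
      ≤ B.card * S.card := by
    calc (∑ a ∈ A \ B, (B.filter fun b => a + b ∈ S).card)
        = ∑ b ∈ B, ((A \ B).filter fun a => a + b ∈ S).card := by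
          simp only [Finset.card_filter]
          rw [Finset.sum_comm]
      _ ≤ ∑ _b ∈ B, S.card := by
          refine Finset.sum_le_sum fun b _ => ?_
          refine Finset.card_le_card_of_injOn (· + b)
            (fun x hx => (Finset.mem_filter.1 hx).2) ?_
          exact (add_left_injective b).injOn
      _ = B.card * S.card := by rw [Finset.sum_const, smul_eq_mul]
  have hkey : (∑ a ∈ A \ B, (A \ B).card * (B.filter fun b => a + b ∈ S).card)
      ≤ ∑ _a ∈ A \ B, B.card * S.card := by
    rw [← Finset.mul_sum, Finset.sum_const, smul_eq_mul]
    exact Nat.mul_le_mul_left _ hsum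
  obtain ⟨a, haAB, hle⟩ := Finset.exists_le_of_sum_le hne hkey
  exact ⟨a, haAB, by rwa [hcardsd] at hle⟩

/-- For sufficiently small `ε > 0` and any sufficiently large finite subset `A` of an
abelian group with `|A| = k`, there is `B ⊆ A` with `|B| ≤ (3 log(1/ε)/ε) √k` and
`|B +̂ B| ≥ (1 − ε) k`.  (Logarithms are to base 2.) -/
theorem exists_small_subset_large_hatAdd :
    ∃ ε₀ : ℝ, 0 < ε₀ ∧ ∀ ε : ℝ, 0 < ε → ε ≤ ε₀ →
      ∃ k₀ : ℕ, ∀ (G : Type u) [AddCommGroup G] [DecidableEq G] (A : Finset G),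
        k₀ ≤ A.card →
        ∃ B : Finset G, B ⊆ A ∧
          (B.card : ℝ) ≤ 3 * Real.logb 2 (1 / ε) / ε * Real.sqrt (A.card : ℝ) ∧
          (1 - ε) * (A.card : ℝ) ≤ ((hatAdd B).card : ℝ) := by
  refine ⟨1/2, by norm_num, fun ε hε hε2 => ?_⟩
  refine ⟨max 4 ⌈(100:ℝ)/ε^3⌉₊, fun G _ _ A hA => ?_⟩
  set k : ℕ := A.card with hk
  have hk4 : (4:ℕ) ≤ k := le_trans (le_max_left _ _) hA
  have hkR : (100:ℝ)/ε^3 ≤ (k:ℝ) := by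
    calc (100:ℝ)/ε^3 ≤ (⌈(100:ℝ)/ε^3⌉₊ : ℝ) := Nat.le_ceil _
      _ ≤ (k:ℝ) := by exact_mod_cast le_trans (le_max_right _ _) hA
  have hkpos : (0:ℝ) < k := by positivity
  have hε3k : (100:ℝ) ≤ ε^3 * k := by
    rw [div_le_iff₀ (by positivity)] at hkR
    linarith
  set M : ℕ := ⌈2 * Real.sqrt ((k:ℝ)/ε)⌉₊ + 1 with hM
  have hsq : Real.sqrt ((k:ℝ)/ε) ^ 2 = (k:ℝ)/ε := Real.sq_sqrt (by positivity)
  have hsqnn : (0:ℝ) ≤ Real.sqrt ((k:ℝ)/ε) := Real.sqrt_nonneg _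
  have hMlb : 2 * Real.sqrt ((k:ℝ)/ε) ≤ (M:ℝ) - 1 := by
    have := Nat.le_ceil (2 * Real.sqrt ((k:ℝ)/ε))
    push_cast [hM]; linarith
  have hMub : (M:ℝ) - 1 ≤ 2 * Real.sqrt ((k:ℝ)/ε) + 1 := by
    have := Nat.ceil_lt_add_one (a := 2 * Real.sqrt ((k:ℝ)/ε)) (by positivity)
    push_cast [hM]; linarith
  -- bound : M - 1 ≤ ε k / 2
  have hsqbound : 2 * Real.sqrt ((k:ℝ)/ε) ≤ ε * k / 4 := by
    have h64 : 64*(k:ℝ) ≤ ε^3*(k:ℝ)^2 := by nlinarith [hε3k, hkpos]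
    have harg : (k:ℝ)/ε ≤ (ε*(k:ℝ)/8)^2 := by
      rw [div_le_iff₀ hε]
      nlinarith [h64, hε, hkpos]
    calc 2 * Real.sqrt ((k:ℝ)/ε) ≤ 2 * Real.sqrt ((ε*(k:ℝ)/8)^2) := by
          have := Real.sqrt_le_sqrt harg
          linarith
      _ = 2 * (ε*(k:ℝ)/8) := by rw [Real.sqrt_sq (by positivity)]
      _ = ε * k / 4 := by ring
  have h1le : (1:ℝ) ≤ ε * k / 4 := by nlinarith [hε, hkpos, hε3k, sq_nonneg ε]
  have hM1 : (M:ℝ) - 1 ≤ ε * k / 2 := by linarith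
  -- induction
  have key : ∀ j : ℕ, j ≤ M →
      ∃ B : Finset G, B ⊆ A ∧ B.card ≤ j ∧
        ((1-ε) * (k:ℝ) ≤ ((hatAdd B).card : ℝ) ∨
          (B.card = j ∧ ε * j * ((j:ℝ)-1) / 4 ≤ ((hatAdd B).card : ℝ))) := by
    intro j
    induction j with
    | zero =>
      intro _
      refine ⟨∅, Finset.empty_subset _, le_refl _, Or.inr ⟨rfl, ?_⟩⟩
      simp [hatAdd]
    | succ j ih =>
      intro hjM
      obtain ⟨B, hBA, hBcard, hB⟩ := ih (Nat.le_of_succ_le hjM)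
      rcases hB with hdone | ⟨hcard, hgS⟩
      · exact ⟨B, hBA, le_trans hBcard (Nat.le_succ j), Or.inl hdone⟩
      by_cases hfin : (1-ε) * (k:ℝ) ≤ ((hatAdd B).card : ℝ)
      · exact ⟨B, hBA, le_trans hBcard (Nat.le_succ j), Or.inl hfin⟩
      push_neg at hfin
      have hjR : (j:ℝ) ≤ ε * k / 2 := by
        have h1 : ((j:ℝ)+1) ≤ (M:ℝ) := by exact_mod_cast hjM
        linarith
      have hjk : B.card < A.card := by
        rw [hcard, ← hk]
        have : (j:ℝ) < (k:ℝ) := by nlinarith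
        exact_mod_cast this
      obtain ⟨a, haAB, hgood⟩ := exists_good_element hBA hjk
      have haA : a ∈ A := (Finset.mem_sdiff.1 haAB).1
      have haB : a ∉ B := (Finset.mem_sdiff.1 haAB).2
      refine ⟨insert a B, Finset.insert_subset haA hBA, ?_, Or.inr ⟨?_, ?_⟩⟩
      · rw [Finset.card_insert_of_notMem haB, hcard]
      · rw [Finset.card_insert_of_notMem haB, hcard]
      -- now the numeric estimate
      set S := hatAdd B with hSdef
      set c : ℕ := (B.filter fun b => a + b ∈ S).card with hc
      set n : ℕ := (B.filter fun b => a + b ∉ S).card with hn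
      have hcn : c + n = B.card := by
        rw [hc, hn]
        exact Finset.card_filter_add_card_filter_not _
      have hins := hatAdd_insert_card (B := B) (a := a) haB
      have hinsR : (S.card : ℝ) + (n:ℝ) ≤ ((hatAdd (insert a B)).card : ℝ) := by
        exact_mod_cast hins
      have hgoodR : ((k:ℝ) - (j:ℝ)) * (c:ℝ) ≤ (j:ℝ) * (S.card:ℝ) := by
        have hsub : ((A.card - B.card : ℕ) : ℝ) = (k:ℝ) - (j:ℝ) := by
          rw [Nat.cast_sub (le_of_lt hjk), hcard, ← hk]
        calc ((k:ℝ) - (j:ℝ)) * (c:ℝ) = ((A.card - B.card : ℕ) : ℝ) * (c:ℝ) := by rw [hsub]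
          _ ≤ ((B.card : ℕ):ℝ) * (S.card : ℝ) := by exact_mod_cast hgood
          _ = (j:ℝ) * (S.card:ℝ) := by rw [hcard]
      have hnR : (n:ℝ) = (j:ℝ) - (c:ℝ) := by
        have : (c:ℝ) + (n:ℝ) = (j:ℝ) := by exact_mod_cast hcn.trans hcard
        linarith
      have hcnn : (0:ℝ) ≤ (c:ℝ) := Nat.cast_nonneg c
      have hjnn : (0:ℝ) ≤ (j:ℝ) := Nat.cast_nonneg j
      have hSlb : ε * j * ((j:ℝ)-1) / 4 ≤ (S.card:ℝ) := hgS
      have hkj : (0:ℝ) < (k:ℝ) - (j:ℝ) := by nlinarith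
      -- target
      push_cast
      rw [add_sub_cancel_right]
      have htarget : ε * ((j:ℝ)+1) * (j:ℝ) / 4 ≤ (S.card:ℝ) + (n:ℝ) := by
        rw [hnR]
        nlinarith [mul_nonneg hjnn (sub_nonneg.2 hjR),
          mul_le_mul_of_nonneg_left hfin.le (le_of_lt hkj),
          mul_nonneg (le_of_lt hkj) (sub_nonneg.2 hSlb),
          mul_nonneg hjnn (sub_nonneg.2 hSlb), hε, hε2]
      linarith
  obtain ⟨B, hBA, hBcard, hB⟩ := key M (le_refl M)
  have hfinal : (1-ε) * (k:ℝ) ≤ ((hatAdd B).card : ℝ) := by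
    rcases hB with h | ⟨hcard, hg⟩
    · exact h
    · have hM2 : 4 * ((k:ℝ)/ε) ≤ ((M:ℝ)-1)^2 := by nlinarith
      have : (k:ℝ) ≤ ε * M * ((M:ℝ)-1) / 4 := by
        have hM1' : (1:ℝ) ≤ (M:ℝ) := by
          have : (1:ℕ) ≤ M := by omega
          exact_mod_cast this
        have h4k : 4 * (k:ℝ) ≤ ε * ((M:ℝ)-1)^2 := by
          calc 4*(k:ℝ) = ε * (4 * ((k:ℝ)/ε)) := by field_simp
            _ ≤ ε * ((M:ℝ)-1)^2 := mul_le_mul_of_nonneg_left hM2 hε.le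
        nlinarith
      calc (1-ε) * (k:ℝ) ≤ (k:ℝ) := by nlinarith
        _ ≤ ε * M * ((M:ℝ)-1) / 4 := this
        _ ≤ ((hatAdd B).card : ℝ) := hg
  refine ⟨B, hBA, ?_, hfinal⟩
  -- size bound
  have hsqrtk : (2:ℝ) ≤ Real.sqrt (k:ℝ) := by
    have : ((4:ℕ):ℝ) ≤ (k:ℝ) := by exact_mod_cast hk4
    calc (2:ℝ) = Real.sqrt 4 := by
          rw [show (4:ℝ) = 2^2 by norm_num, Real.sqrt_sq (by norm_num)]
      _ ≤ Real.sqrt (k:ℝ) := Real.sqrt_le_sqrt (by exact_mod_cast this)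
  have hsqrtnn : (0:ℝ) ≤ Real.sqrt (k:ℝ) := Real.sqrt_nonneg _
  have hsqrtdiv : Real.sqrt ((k:ℝ)/ε) ≤ Real.sqrt (k:ℝ) / ε := by
    have h1 : (k:ℝ)/ε ≤ (Real.sqrt (k:ℝ)/ε)^2 := by
      rw [div_pow, Real.sq_sqrt hkpos.le]
      rw [div_le_div_iff₀ hε (by positivity)]
      nlinarith
    calc Real.sqrt ((k:ℝ)/ε) ≤ Real.sqrt ((Real.sqrt (k:ℝ)/ε)^2) := Real.sqrt_le_sqrt h1
      _ = Real.sqrt (k:ℝ)/ε := Real.sqrt_sq (by positivity)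
  have hL : (1:ℝ) ≤ Real.logb 2 (1/ε) := by
    have h2 : (2:ℝ) ≤ 1/ε := by
      rw [le_div_iff₀ hε]; linarith
    calc (1:ℝ) = Real.logb 2 2 := (Real.logb_self_eq_one (by norm_num)).symm
      _ ≤ Real.logb 2 (1/ε) := Real.logb_le_logb_of_le (by norm_num) (by norm_num) h2
  have hMR : (B.card : ℝ) ≤ (M:ℝ) := by
    exact_mod_cast hBcard
  have : (M:ℝ) ≤ 3 * Real.sqrt (k:ℝ) / ε := by
    have h2 : (2:ℝ) ≤ Real.sqrt (k:ℝ) / ε := by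
      calc (2:ℝ) ≤ Real.sqrt (k:ℝ) := hsqrtk
        _ ≤ Real.sqrt (k:ℝ) / ε := by
          rw [le_div_iff₀ hε]; nlinarith
    calc (M:ℝ) ≤ 2 * Real.sqrt ((k:ℝ)/ε) + 2 := by linarith
      _ ≤ 2 * (Real.sqrt (k:ℝ)/ε) + Real.sqrt (k:ℝ)/ε := by linarith
      _ = 3 * Real.sqrt (k:ℝ) / ε := by ring
  calc (B.card : ℝ) ≤ 3 * Real.sqrt (k:ℝ) / ε := le_trans hMR this
    _ ≤ 3 * Real.logb 2 (1/ε) / ε * Real.sqrt (k:ℝ) := by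
      rw [div_mul_eq_mul_div, div_le_div_iff₀ hε hε]
      nlinarith [mul_nonneg (mul_nonneg (sub_nonneg.2 hL) (Real.sqrt_nonneg ((k:ℕ):ℝ))) hε.le]
end

section
/- Suppose A ⊆ (ℤ/2ℤ)^n has cardinality k (sufficiently large) and |A +̂ A| = m. Then the Freiman dimension over ℤ/2ℤ satisfies r_{ℤ/2ℤ}(A) + 1 ≤ 4 m (log k)/k. -/
/-!
Evaluation `a ↦ (φ ↦ φ a)` embeds `A` Freiman-isomorphically into the dual of `Hom₂(A, 𝔽₂)`,
where it spans; so that dual has dimension `d = r(A) + 1` and contains `d` linearly independent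
elements of the image of `A`. Their `C(d, t)` distinct `t`-element subset sums lie in `t • A`, so
Plünnecke–Ruzsa gives `(d / t) ^ t ≤ C(d, t) ≤ K ^ t k` with `K = |A + A| / k ≤ (m + 1) / k`
(in characteristic 2, `a + a = 0`). Taking `t = ⌈log k⌉` makes `k ^ (1 / t) ≤ e`, whence
`d ≤ e K t ≤ 4 m log k / k`.
-/

open Finset Module Submodule Pointwise

theorem Nat.pow_le_choose_mul_pow {d t : ℕ} (htd : t ≤ d) : d ^ t ≤ d.choose t * t ^ t := by
  have hfac : d ^ t * t.factorial ≤ d.choose t * t ^ t * t.factorial := by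
    calc d ^ t * t.factorial = ∏ i ∈ range t, d * (t - i) := by
          rw [prod_mul_distrib, prod_const, card_range, ← Nat.descFactorial_self,
            Nat.descFactorial_eq_prod_range]
      _ ≤ ∏ i ∈ range t, (d - i) * t := by
          refine prod_le_prod' fun i hi => ?_
          have hit : i ≤ t := (mem_range.1 hi).le
          zify [hit, hit.trans htd]
          nlinarith
      _ = d.choose t * t ^ t * t.factorial := by
          rw [prod_mul_distrib, prod_const, card_range, ← Nat.descFactorial_eq_prod_range,
            Nat.descFactorial_eq_factorial_mul_choose]
          ring
  exact Nat.le_of_mul_le_mul_right hfac t.factorial_pos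

theorem Finset.sum_mem_card_nsmul {M : Type*} [AddCommMonoid M] [DecidableEq M] {s B : Finset M}
    (hsB : s ⊆ B) : ∑ x ∈ s, x ∈ #s • B := by
  rw [← mem_coe, coe_nsmul, ← sum_const]
  exact Set.finsetSum_mem_finsetSum s _ id hsB

theorem LinearIndepOn.injOn_finset_sum {R M : Type*} [Ring R] [Nontrivial R] [AddCommGroup M]
    [Module R M] {b : Set M} (hb : LinearIndepOn R id b) :
    Set.InjOn (fun s : Finset M => ∑ x ∈ s, x) {s | (s : Set M) ⊆ b} := by
  classical
  intro s₁ hs₁ s₂ hs₂ hsum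
  let g : M → R := fun x => (if x ∈ s₁ then 1 else 0) - (if x ∈ s₂ then 1 else 0)
  have hg : ∑ x ∈ s₁ ∪ s₂, g x • id x = 0 := by
    simp only [g, sub_smul, ite_smul, one_smul, zero_smul, id, sum_sub_distrib, sum_ite_mem,
      union_inter_cancel_left, union_inter_cancel_right]
    exact sub_eq_zero.2 hsum
  have hzero := linearIndepOn_iff'.1 hb _ g (by simpa using Set.union_subset hs₁ hs₂) hg
  ext x
  have hx : x ∈ s₁ ∨ x ∈ s₂ → g x = 0 := fun h => hzero x (mem_union.2 h)
  by_cases h₁ : x ∈ s₁ <;> by_cases h₂ : x ∈ s₂ <;> simp [g, h₁, h₂] at hx ⊢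

theorem choose_finrank_span_le_card_nsmul {K V : Type*} [DivisionRing K] [AddCommGroup V]
    [Module K V] [DecidableEq V] (B : Finset V) (t : ℕ) :
    (finrank K (span K (B : Set V))).choose t ≤ #(t • B) := by
  obtain ⟨b, hbB, -, hBb, hb⟩ :=
    exists_linearIndepOn_id_extension (linearIndepOn_empty K id) (Set.empty_subset (B : Set V))
  lift b to Finset V using B.finite_toSet.subset hbB
  have hspan : span K (b : Set V) = span K B := le_antisymm (span_mono hbB) (span_le.2 hBb)
  rw [← hspan, finrank_span_finset_eq_card hb, ← card_powersetCard]
  refine card_le_card_of_injOn (fun s => ∑ x ∈ s, x) (fun s hs => ?_) fun s₁ hs₁ s₂ hs₂ =>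
    hb.injOn_finset_sum (coe_subset.2 (mem_powersetCard.1 hs₁).1)
      (coe_subset.2 (mem_powersetCard.1 hs₂).1)
  obtain ⟨hsb, rfl⟩ := mem_powersetCard.1 hs
  exact sum_mem_card_nsmul (hsb.trans (coe_subset.1 hbB))

theorem pow_finrank_span_le {K V : Type*} [DivisionRing K] [AddCommGroup V] [Module K V]
    [DecidableEq V] {B : Finset V} (hB : B.Nonempty) {t : ℕ}
    (ht : t ≤ finrank K (span K (B : Set V))) :
    (finrank K (span K (B : Set V)) : ℝ) ^ t ≤ (#(B + B) / #B : ℝ) ^ t * #B * t ^ t := by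
  set d := finrank K (span K (B : Set V))
  have hplu : (#(t • B) : ℝ) ≤ (#(B + B) / #B : ℝ) ^ t * #B := by
    have := NNRat.cast_le (K := ℝ) |>.2 (pluennecke_ruzsa_inequality_nsmul_add hB B t)
    push_cast at this
    exact this
  calc (d : ℝ) ^ t ≤ (d.choose t * t ^ t : ℕ) := by exact_mod_cast Nat.pow_le_choose_mul_pow ht
    _ ≤ (#(t • B) * t ^ t : ℕ) := by gcongr; exact choose_finrank_span_le_card_nsmul B t
    _ ≤ (#(B + B) / #B : ℝ) ^ t * #B * t ^ t := by push_cast; gcongr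

theorem card_add_image_le_card_add {α G H : Type*} [AddCommMonoid G] [AddCommMonoid H]
    [DecidableEq G] [DecidableEq H] (s : Finset α) (u : α → G) (v : α → H)
    (huv : ∀ a ∈ s, ∀ b ∈ s, ∀ c ∈ s, ∀ d ∈ s, u a + u b = u c + u d → v a + v b = v c + v d) :
    #(s.image v + s.image v) ≤ #(s.image u + s.image u) := by
  refine card_le_card_of_forall_subsingleton
    (fun y x => ∃ a ∈ s, ∃ b ∈ s, u a + u b = x ∧ v a + v b = y) ?_ ?_
  · intro y hy
    obtain ⟨_, ha', _, hb', rfl⟩ := mem_add.1 hy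
    obtain ⟨a, ha, rfl⟩ := mem_image.1 ha'
    obtain ⟨b, hb, rfl⟩ := mem_image.1 hb'
    exact ⟨u a + u b, add_mem_add (mem_image_of_mem u ha) (mem_image_of_mem u hb),
      a, ha, b, hb, rfl, rfl⟩
  · rintro x - y₁ ⟨-, a, ha, b, hb, rfl, rfl⟩ y₂ ⟨-, c, hc, d, hd, hcd, rfl⟩
    exact huv a ha b hb c hc d hd hcd.symm

theorem card_add_le_card_hatAdd_add_one {G : Type*} [AddCommGroup G] [Module (ZMod 2) G]
    [DecidableEq G] (X : Finset G) : #(X + X) ≤ #(hatAdd X) + 1 := by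
  calc #(X + X) ≤ #(insert 0 (hatAdd X)) := by
        refine card_le_card fun x hx => ?_
        obtain ⟨a, ha, b, hb, rfl⟩ := mem_add.1 hx
        by_cases hab : a = b
        · simp [hab, ZModModule.add_self]
        · exact mem_insert_of_mem (mem_image.2 ⟨(a, b), by simp [ha, hb, hab], rfl⟩)
    _ ≤ #(hatAdd X) + 1 := card_insert_le _ _

section freimanEval

variable (F : Type*) [Field F] {G : Type*} [AddCommGroup G] (A : Set G)

def freimanEval (a : A) : Dual F (freimanHoms F A) :=
  (LinearMap.proj a).comp (freimanHoms F A).subtype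

variable {F A}

theorem freimanEval_add_freimanEval {a b c d : A} (h : (a : G) + b = c + d) :
    freimanEval F A a + freimanEval F A b = freimanEval F A c + freimanEval F A d := by
  ext φ
  exact φ.2 a b c d h

theorem span_range_freimanEval [Finite A] : span F (Set.range (freimanEval F A)) = ⊤ := by
  refine span_eq_top_of_ne_zero fun φ hφ => ?_
  obtain ⟨a, ha⟩ : ∃ a, (φ : A → F) a ≠ 0 := by
    by_contra! h
    exact hφ (Subtype.ext (funext h))
  exact ⟨_, ⟨a, rfl⟩, ha⟩

theorem freimanDim_add_one [Finite A] (hA : A.Nonempty) :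
    freimanDim F A + 1 = finrank F (freimanHoms F A) := by
  have : Nontrivial (freimanHoms F A) := by
    refine ⟨⟨⟨fun _ => 1, fun _ _ _ _ _ => rfl⟩, 0, fun h => ?_⟩⟩
    exact one_ne_zero (congrFun (congrArg Subtype.val h) ⟨_, hA.some_mem⟩)
  exact Nat.sub_add_cancel finrank_pos

end freimanEval

theorem freimanEval_injective {F ι : Type*} [Field F] (A : Set (ι → F)) :
    Function.Injective (freimanEval F A) := fun _ _ hab =>
  Subtype.ext <| funext fun i =>
    LinearMap.congr_fun hab ⟨fun x => (x : ι → F) i, fun _ _ _ _ h => congrFun h i⟩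

-- `32 ≤ k` gives `3 ≤ log k` and `31 ≤ m`, enough to absorb `e (m + 1) (log k + 1) ≤ 4 m log k`.
theorem le_four_mul_mul_log_div {d : ℕ} {k m : ℝ} (hk : 32 ≤ k) (hkm : k ≤ m + 1)
    (hd : ∀ t : ℕ, t ≤ d → (d : ℝ) ^ t ≤ ((m + 1) / k) ^ t * k * t ^ t) :
    (d : ℝ) ≤ 4 * m * Real.log k / k := by
  have hk0 : 0 < k := by linarith
  have hc : 0 ≤ (m + 1) / k := div_nonneg (by linarith) hk0.le
  have he : Real.exp 1 < 2.7182818286 := Real.exp_one_lt_d9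
  have hL : 3 ≤ Real.log k := by
    rw [Real.le_log_iff_exp_le hk0, show (3 : ℝ) = 1 + 1 + 1 by norm_num, Real.exp_add,
      Real.exp_add]
    nlinarith [Real.exp_pos 1]
  set t := ⌈Real.log k⌉₊
  have htL : (t : ℝ) < Real.log k + 1 := Nat.ceil_lt_add_one (by linarith)
  rw [le_div_iff₀ hk0]
  rcases le_or_gt d t with hdt | htd
  · have : (d : ℝ) ≤ t := by exact_mod_cast hdt
    nlinarith [Real.log_le_sub_one_of_pos hk0]
  have hke : k ≤ Real.exp 1 ^ t := by
    rw [← Real.exp_nat_mul, mul_one, ← Real.exp_log hk0]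
    exact Real.exp_le_exp.2 (Nat.le_ceil _)
  have hpow : (d : ℝ) ^ t ≤ ((m + 1) / k * t * Real.exp 1) ^ t :=
    calc (d : ℝ) ^ t ≤ ((m + 1) / k) ^ t * k * t ^ t := hd t htd.le
      _ ≤ ((m + 1) / k) ^ t * Real.exp 1 ^ t * t ^ t := by gcongr
      _ = ((m + 1) / k * t * Real.exp 1) ^ t := by rw [mul_pow, mul_pow]; ring
  have ht0 : t ≠ 0 := (Nat.ceil_pos.2 (by linarith)).ne'
  have hdle := le_of_pow_le_pow_left₀ ht0 (by positivity) hpow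
  rw [div_mul_eq_mul_div, div_mul_eq_mul_div, le_div_iff₀ hk0] at hdle
  have hmt : (m + 1) * t * Real.exp 1 ≤ (m + 1) * (Real.log k + 1) * 2.7182818286 := by
    gcongr
    · nlinarith
    · linarith
  nlinarith [mul_nonneg (by linarith : (0 : ℝ) ≤ m - 31) (by linarith : 0 ≤ Real.log k - 3)]

theorem pow_finrank_freimanHoms_le {F ι : Type*} [Field F] [DecidableEq (ι → F)]
    {A : Finset (ι → F)} (hA : A.Nonempty) {t : ℕ}
    (ht : t ≤ finrank F (freimanHoms F (A : Set (ι → F)))) :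
    (finrank F (freimanHoms F (A : Set (ι → F))) : ℝ) ^ t ≤
      (#(A + A) / #A : ℝ) ^ t * #A * t ^ t := by
  classical
  let B := (univ : Finset (A : Set (ι → F))).image (freimanEval F _)
  have hBA : #B = #A := by simp [B, card_image_of_injective _ (freimanEval_injective _)]
  have hBB : #(B + B) ≤ #(A + A) := by
    have h := card_add_image_le_card_add univ Subtype.val (freimanEval F (A : Set (ι → F)))
      fun a _ b _ c _ d _ h => freimanEval_add_freimanEval h
    simpa [B] using h
  have hspan : finrank F (span F (B : Set (Dual F (freimanHoms F (A : Set (ι → F)))))) =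
      finrank F (freimanHoms F (A : Set (ι → F))) := by
    rw [coe_image, coe_univ, Set.image_univ, span_range_freimanEval, finrank_top,
      Subspace.dual_finrank_eq]
  have hB : B.Nonempty := card_pos.1 (hBA ▸ card_pos.2 hA)
  rw [← hspan] at ht ⊢
  calc _ ≤ (#(B + B) / #B : ℝ) ^ t * #B * t ^ t := pow_finrank_span_le hB ht
    _ ≤ _ := by rw [hBA]; gcongr

/-- If `A ⊆ (ℤ/2ℤ)^n` has sufficiently large cardinality `k` and `|A +̂ A| = m`, then the
Freiman dimension over `ℤ/2ℤ` satisfies `r_{ℤ/2ℤ}(A) + 1 ≤ 4 m (log k) / k`, where `log`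
is the natural logarithm. -/
theorem freimanDim_zmod2_le :
    ∃ k₀ : ℕ, ∀ (n : ℕ) (A : Finset (Fin n → ZMod 2)) (k m : ℕ),
      A.card = k → k₀ ≤ k → (hatAdd A).card = m →
      ((freimanDim (ZMod 2) (A : Set (Fin n → ZMod 2)) : ℝ) + 1) ≤
        4 * (m : ℝ) * Real.log (k : ℝ) / (k : ℝ) := by
  refine ⟨32, fun n A k m hk hk₀ hm => ?_⟩
  subst hk hm
  have hA : A.Nonempty := card_pos.1 (by omega)
  have hAA := card_add_le_card_hatAdd_add_one A
  rw [← Nat.cast_add_one, freimanDim_add_one hA]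
  refine le_four_mul_mul_log_div (by exact_mod_cast hk₀)
    (by exact_mod_cast (card_le_card_add_left hA).trans hAA) fun t ht => ?_
  calc _ ≤ _ := pow_finrank_freimanHoms_le hA ht
    _ ≤ _ := by gcongr; exact_mod_cast hAA
end
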